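/- For fixed ξ₁ < ξ₂ and σ > 0, the function z ↦ E(h | z), the mean of the N(z, σ²) distribution truncated to [ξ₁, ξ₂], is strictly monotone increasing in z. -/

import Mathlib

open Real MeasureTheory

noncomputable def stdPhi (z : ℝ) : ℝ := (Real.sqrt (2 * Real.pi))⁻¹ * Real.exp (-z ^ 2 / 2)

noncomputable def stdCDF (z : ℝ) : ℝ := ∫ t in Set.Iic z, stdPhi t

/-!
Put `φ = stdPhi`, `Φ = stdCDF`. After the substitution `s = z / σ` the function is
`σ * g s`, where `g s = s + (φ a - φ b) / (Φ b - Φ a)` with `a = ξ₁ / σ - s`, `b = ξ₂ / σ - s`.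
Since `φ' t = -t φ t`, the standard normal restricted to `[a, b]` has moments
`m₀ = Φ b - Φ a`, `m₁ = φ a - φ b`, `m₂ = m₀ + a φ a - b φ b`, and differentiating gives
`g' s = (m₀ m₂ - m₁²) / m₀²`, the variance of the truncated law. It is positive by the
strict Cauchy–Schwarz inequality `m₁² < m₀ m₂`.
-/

section WeightedMoments

variable {w : ℝ → ℝ} {a b : ℝ}

theorem intervalIntegral_sq_sub_mul_pos (hab : a < b) (hw : IntervalIntegrable w volume a b)
    (hpos : ∀ t ∈ Set.Ioo a b, 0 < w t) (c : ℝ) :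
    0 < ∫ t in a..b, (t - c) ^ 2 * w t := by
  have hnonneg : 0 ≤ᵐ[volume.restrict (Set.uIoc a b)] fun t => (t - c) ^ 2 * w t := by
    rw [Filter.EventuallyLE, Set.uIoc_of_le hab.le]
    refine ae_restrict_of_ae_eq_of_ae_restrict Ioo_ae_eq_Ioc ?_
    rw [ae_restrict_iff' measurableSet_Ioo]
    filter_upwards with t ht using mul_nonneg (sq_nonneg _) (hpos t ht).le
  have hsupp : Set.Ioo a b \ {c} ⊆ Function.support (fun t => (t - c) ^ 2 * w t) ∩ Set.Ioc a b :=
    fun t ⟨ht, htc⟩ => ⟨mul_ne_zero (pow_ne_zero 2 (sub_ne_zero.2 htc)) (hpos t ht).ne',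
      Set.Ioo_subset_Ioc_self ht⟩
  rw [intervalIntegral.integral_pos_iff_support_of_nonneg_ae' hnonneg
    (hw.continuousOn_mul (by fun_prop))]
  refine ⟨hab, ?_⟩
  calc (0 : ENNReal) < volume (Set.Ioo a b \ {c}) := by
        rw [measure_sdiff_null (Set.Subsingleton.measure_zero Set.subsingleton_singleton _)]
        exact (Measure.measure_Ioo_pos _).2 hab
    _ ≤ _ := measure_mono hsupp

theorem sq_intervalIntegral_mul_lt (hab : a < b) (hw : IntervalIntegrable w volume a b)
    (hpos : ∀ t ∈ Set.Ioo a b, 0 < w t) :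
    (∫ t in a..b, t * w t) ^ 2 < (∫ t in a..b, w t) * ∫ t in a..b, t ^ 2 * w t := by
  set m₀ := ∫ t in a..b, w t
  set m₁ := ∫ t in a..b, t * w t
  set m₂ := ∫ t in a..b, t ^ 2 * w t
  have hm₀ : 0 < m₀ := intervalIntegral.intervalIntegral_pos_of_pos_on hw hpos hab
  -- with `c = m₁ / m₀` the mean of the weight, `∫ (t - c)² w = m₂ - m₁² / m₀`
  set c := m₁ / m₀
  have hw₁ : IntervalIntegrable (fun t => t * w t) volume a b := hw.continuousOn_mul (by fun_prop)
  have hw₂ : IntervalIntegrable (fun t => t ^ 2 * w t) volume a b :=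
    hw.continuousOn_mul (by fun_prop)
  have hexpand : ∫ t in a..b, (t - c) ^ 2 * w t = m₂ - 2 * c * m₁ + c ^ 2 * m₀ := by
    have hpt : ∀ t, (t - c) ^ 2 * w t = t ^ 2 * w t - 2 * c * (t * w t) + c ^ 2 * w t :=
      fun t => by ring
    simp_rw [hpt]
    rw [intervalIntegral.integral_add (hw₂.sub (hw₁.const_mul _)) (hw.const_mul _),
      intervalIntegral.integral_sub hw₂ (hw₁.const_mul _), intervalIntegral.integral_const_mul,
      intervalIntegral.integral_const_mul]
  have hvar := intervalIntegral_sq_sub_mul_pos hab hw hpos c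
  rw [hexpand] at hvar
  have hc : c * m₀ = m₁ := div_mul_cancel₀ _ hm₀.ne'
  nlinarith

end WeightedMoments

theorem stdPhi_pos (z : ℝ) : 0 < stdPhi z := by
  unfold stdPhi
  positivity

@[fun_prop]
theorem continuous_stdPhi : Continuous stdPhi := by
  unfold stdPhi
  fun_prop

theorem integrable_stdPhi : Integrable stdPhi := by
  have h := (integrable_exp_neg_mul_sq (b := 1 / 2) (by norm_num)).const_mul
    (Real.sqrt (2 * Real.pi))⁻¹
  convert h using 2 with x
  unfold stdPhi
  ring_nf

theorem hasDerivAt_stdPhi (x : ℝ) : HasDerivAt stdPhi (-x * stdPhi x) x := by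
  have hexp : HasDerivAt (fun z : ℝ => -z ^ 2 / 2) (-x) x :=
    ((hasDerivAt_pow 2 x).neg.div_const 2).congr_deriv (by push_cast; ring)
  exact (hexp.exp.const_mul _).congr_deriv (by rw [stdPhi]; ring)

theorem stdCDF_sub_stdCDF (a b : ℝ) : stdCDF b - stdCDF a = ∫ t in a..b, stdPhi t :=
  intervalIntegral.integral_Iic_sub_Iic integrable_stdPhi.integrableOn
    integrable_stdPhi.integrableOn

theorem stdCDF_lt_stdCDF {a b : ℝ} (hab : a < b) : stdCDF a < stdCDF b := by
  rw [← sub_pos, stdCDF_sub_stdCDF]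
  exact intervalIntegral.intervalIntegral_pos_of_pos
    (continuous_stdPhi.intervalIntegrable a b) stdPhi_pos hab

theorem hasDerivAt_stdCDF (x : ℝ) : HasDerivAt stdCDF (stdPhi x) x := by
  have h := (intervalIntegral.integral_hasDerivAt_right (continuous_stdPhi.intervalIntegrable 0 x)
    continuous_stdPhi.aestronglyMeasurable.stronglyMeasurableAtFilter
    continuous_stdPhi.continuousAt).const_add (stdCDF 0)
  refine h.congr_of_eventuallyEq (Filter.Eventually.of_forall fun z => ?_)
  show stdCDF z = stdCDF 0 + _
  rw [← stdCDF_sub_stdCDF, add_sub_cancel]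

theorem intervalIntegral_mul_stdPhi (a b : ℝ) :
    ∫ t in a..b, t * stdPhi t = stdPhi a - stdPhi b := by
  rw [intervalIntegral.integral_eq_sub_of_hasDerivAt (f := fun t => -stdPhi t)
    (fun x _ => ((hasDerivAt_stdPhi x).neg).congr_deriv (by ring))
    ((by fun_prop : Continuous fun t => t * stdPhi t).intervalIntegrable a b)]
  ring

theorem intervalIntegral_sq_mul_stdPhi (a b : ℝ) :
    ∫ t in a..b, t ^ 2 * stdPhi t = (∫ t in a..b, stdPhi t) + a * stdPhi a - b * stdPhi b := by
  have hderiv : ∀ x ∈ Set.uIcc a b,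
      HasDerivAt (fun t => -(t * stdPhi t)) (x ^ 2 * stdPhi x - stdPhi x) x := fun x _ =>
    (((hasDerivAt_id' x).mul (hasDerivAt_stdPhi x)).neg).congr_deriv (by ring)
  have hcont : Continuous fun t => t ^ 2 * stdPhi t := by fun_prop
  have h := intervalIntegral.integral_eq_sub_of_hasDerivAt hderiv
    ((hcont.sub continuous_stdPhi).intervalIntegrable a b)
  rw [intervalIntegral.integral_sub (hcont.intervalIntegrable a b)
    (continuous_stdPhi.intervalIntegrable a b)] at h
  linarith

theorem sq_stdPhi_sub_lt {a b : ℝ} (hab : a < b) :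
    (stdPhi a - stdPhi b) ^ 2 <
      (stdCDF b - stdCDF a) * (stdCDF b - stdCDF a + a * stdPhi a - b * stdPhi b) := by
  have h := sq_intervalIntegral_mul_lt hab (continuous_stdPhi.intervalIntegrable a b)
    fun t _ => stdPhi_pos t
  rwa [intervalIntegral_mul_stdPhi, intervalIntegral_sq_mul_stdPhi, ← stdCDF_sub_stdCDF] at h

noncomputable def truncStdNormalMean (a b : ℝ) : ℝ :=
  (stdPhi a - stdPhi b) / (stdCDF b - stdCDF a)

theorem strictMono_add_truncStdNormalMean_sub {α β : ℝ} (hαβ : α < β) :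
    StrictMono fun s : ℝ => s + truncStdNormalMean (α - s) (β - s) := by
  refine strictMono_of_deriv_pos fun s => ?_
  unfold truncStdNormalMean
  have hφ (c : ℝ) : HasDerivAt (fun s => stdPhi (c - s)) ((c - s) * stdPhi (c - s)) s :=
    ((hasDerivAt_stdPhi (c - s)).comp_const_sub c s).congr_deriv (by ring)
  have hΦ (c : ℝ) : HasDerivAt (fun s => stdCDF (c - s)) (-stdPhi (c - s)) s :=
    (hasDerivAt_stdCDF (c - s)).comp_const_sub c s
  have hmass : 0 < stdCDF (β - s) - stdCDF (α - s) := sub_pos.2 (stdCDF_lt_stdCDF (by linarith))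
  have hvar := sq_stdPhi_sub_lt (show α - s < β - s by linarith)
  have hderiv : HasDerivAt (fun s : ℝ =>
      s + (stdPhi (α - s) - stdPhi (β - s)) / (stdCDF (β - s) - stdCDF (α - s))) _ s :=
    (hasDerivAt_id' s).add (((hφ α).sub (hφ β)).div ((hΦ β).sub (hΦ α)) hmass.ne')
  rw [hderiv.deriv, one_add_div (by positivity), Pi.sub_apply]
  exact div_pos (by linarith) (by positivity)

theorem truncated_gaussian_mean_strict_mono (ξ₁ ξ₂ σ : ℝ) (hξ : ξ₁ < ξ₂) (hσ : 0 < σ) :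
    StrictMono (fun z : ℝ =>
      z + σ * (stdPhi ((ξ₁ - z) / σ) - stdPhi ((ξ₂ - z) / σ)) /
        (stdCDF ((ξ₂ - z) / σ) - stdCDF ((ξ₁ - z) / σ))) := by
  have hstd := strictMono_add_truncStdNormalMean_sub (div_lt_div_of_pos_right hξ hσ)
  intro x y hxy
  have h := mul_lt_mul_of_pos_left (hstd (div_lt_div_of_pos_right hxy hσ)) hσ
  simpa only [truncStdNormalMean, mul_add, mul_div_cancel₀ _ hσ.ne', ← sub_div,
    ← mul_div_assoc] using h
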